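/- arXiv:1711.00817 — 2 statements merged into one kernel-verified Lean document; each statement's English description precedes it below -/
import Mathlib

section
/- The function ψ(x) defined as log(1 + x + x²/2) for x ≥ 0 and -log(1 - x + x²/2) for x < 0 is continuous, strictly increasing on ℝ, and satisfies -log(1 - x + x²/2) ≤ ψ(x) ≤ log(1 + x + x²/2) for all real x. -/
lemma pos_plus (x : ℝ) : 0 < 1 + x + x ^ 2 / 2 := by nlinarith [sq_nonneg (x + 1)]

lemma pos_minus (x : ℝ) : 0 < 1 - x + x ^ 2 / 2 := by nlinarith [sq_nonneg (x - 1)]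

lemma key_log (x : ℝ) :
    0 ≤ Real.log (1 - x + x ^ 2 / 2) + Real.log (1 + x + x ^ 2 / 2) := by
  rw [← Real.log_mul (ne_of_gt (pos_minus x)) (ne_of_gt (pos_plus x))]
  apply Real.log_nonneg
  nlinarith [sq_nonneg (x ^ 2)]

/-- The piecewise function `ψ(x) = log(1+x+x²/2)` for `x ≥ 0` and `ψ(x) = -log(1-x+x²/2)`
for `x < 0` is a valid Catoni influence function: continuous, strictly increasing, and
squeezed between the two stated logarithms. -/
theorem stmt9 :
    let ψ : ℝ → ℝ := fun x =>
      if 0 ≤ x then Real.log (1 + x + x ^ 2 / 2) else -Real.log (1 - x + x ^ 2 / 2)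
    Continuous ψ ∧ StrictMono ψ ∧
      ∀ x : ℝ, -Real.log (1 - x + x ^ 2 / 2) ≤ ψ x ∧ ψ x ≤ Real.log (1 + x + x ^ 2 / 2) := by
  intro ψ
  refine ⟨?_, ?_, ?_⟩
  · have hcont : Continuous fun x : ℝ =>
        if (fun _ : ℝ => (0:ℝ)) x ≤ id x then Real.log (1 + x + x ^ 2 / 2)
        else -Real.log (1 - x + x ^ 2 / 2) := by
      apply Continuous.if_le
      · rw [continuous_iff_continuousAt]
        intro x
        have h1 : ContinuousAt (Real.log ∘ fun x : ℝ => 1 + x + x ^ 2 / 2) x :=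
          ContinuousAt.comp (Real.continuousAt_log (ne_of_gt (pos_plus x)))
            (by fun_prop)
        exact h1
      · rw [continuous_iff_continuousAt]
        intro x
        have h1 : ContinuousAt (Real.log ∘ fun x : ℝ => 1 - x + x ^ 2 / 2) x :=
          ContinuousAt.comp (Real.continuousAt_log (ne_of_gt (pos_minus x)))
            (by fun_prop)
        exact h1.neg
      · exact continuous_const
      · exact continuous_id
      · intro x hx
        simp only [id] at hx
        subst hx
        norm_num
    exact hcont
  · intro x y hxy
    by_cases hx : (0:ℝ) ≤ x
    · have hy : (0:ℝ) ≤ y := le_of_lt (lt_of_le_of_lt hx hxy)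
      simp only [ψ, if_pos hx, if_pos hy]
      exact Real.log_lt_log (pos_plus x) (by nlinarith)
    · push_neg at hx
      by_cases hy : (0:ℝ) ≤ y
      · simp only [ψ, if_neg (not_le.mpr hx), if_pos hy]
        have h1 : 0 < Real.log (1 - x + x ^ 2 / 2) :=
          Real.log_pos (by nlinarith)
        have h2 : 0 ≤ Real.log (1 + y + y ^ 2 / 2) :=
          Real.log_nonneg (by nlinarith)
        linarith
      · push_neg at hy
        simp only [ψ, if_neg (not_le.mpr hx), if_neg (not_le.mpr hy)]
        apply neg_lt_neg
        exact Real.log_lt_log (pos_minus y) (by nlinarith)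
  · intro x
    have h := key_log x
    by_cases hx : (0:ℝ) ≤ x
    · simp only [ψ, if_pos hx]
      exact ⟨by linarith, le_refl _⟩
    · simp only [ψ, if_neg hx]
      exact ⟨le_refl _, by linarith⟩
end

section
/- Suppose μ₁,...,μₙ are i.i.d. Uniform[c₀, c₁] with c₁ > c₀, and let Δᵢ = μᵢ - min_j μⱼ. Then E[∑ᵢ min(K·log(n)/Δᵢ², n)] = O(n^{3/2}·log^{1/2} n) for any fixed constant K > 0. -/
/-!
Let `M i` be the least of the values `U j`, `j ≠ i`, and `h u = min (a / u²) c` for `u > 0`,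
`h u = 0` otherwise. Pointwise, `min (a / (U i - min U)²) c ≤ c·[U i ≤ M i] + h (U i - M i)`.
Almost surely the values are distinct, so at most one index has `U i ≤ M i`, at cost `c`.
As `U i` is independent of `M i` and has density at most `1 / (c₁ - c₀)`,
`E h (U i - M i) ≤ ∫ h / (c₁ - c₀) = 2 √(a c) / (c₁ - c₀)`. With `a = K log n`, `c = n` the
expectation is at most `n + 2 n √(K n log n) / (c₁ - c₀) = O(n^{3/2} √(log n))`.
-/

open MeasureTheory ProbabilityTheory Filter Asymptotics Set
open scoped Finset

lemma integrableOn_Ioi_div_sq (a : ℝ) {s : ℝ} (hs : 0 < s) :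
    IntegrableOn (fun u : ℝ => a / u ^ 2) (Ioi s) := by
  refine IntegrableOn.congr_fun
    ((integrableOn_Ioi_rpow_of_lt (by norm_num : (-2 : ℝ) < -1) hs).const_mul a)
    (fun u hu => ?_) measurableSet_Ioi
  simp [Real.rpow_neg (hs.trans hu).le, div_eq_mul_inv]

lemma integral_Ioi_div_sq (a : ℝ) {s : ℝ} (hs : 0 < s) :
    ∫ u in Ioi s, a / u ^ 2 = a / s := by
  have h := integral_Ioi_rpow_of_lt (by norm_num : (-2 : ℝ) < -1) hs
  rw [setIntegral_congr_fun measurableSet_Ioi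
    (fun u hu => by simp [Real.rpow_neg (hs.trans hu).le, div_eq_mul_inv] :
      EqOn (fun u : ℝ => a / u ^ 2) (fun u => a * u ^ (-2 : ℝ)) (Ioi s)),
    integral_const_mul, h]
  norm_num [Real.rpow_neg_one, div_eq_mul_inv]

noncomputable def cappedInvSq (a c u : ℝ) : ℝ := if u ≤ 0 then 0 else min (a / u ^ 2) c

section CappedInvSq

variable {a c : ℝ}

lemma cappedInvSq_nonneg (ha : 0 ≤ a) (hc : 0 ≤ c) (u : ℝ) : 0 ≤ cappedInvSq a c u := by
  unfold cappedInvSq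
  split_ifs
  exacts [le_rfl, le_min (by positivity) hc]

lemma norm_cappedInvSq_le (ha : 0 ≤ a) (hc : 0 ≤ c) (u : ℝ) : ‖cappedInvSq a c u‖ ≤ c := by
  rw [Real.norm_of_nonneg (cappedInvSq_nonneg ha hc u), cappedInvSq]
  split_ifs
  exacts [hc, min_le_right _ _]

lemma measurable_cappedInvSq : Measurable (cappedInvSq a c) :=
  Measurable.ite measurableSet_Iic measurable_const
    ((measurable_const.div (measurable_id.pow_const 2)).min measurable_const)

lemma cappedInvSq_le_indicator_add_indicator (ha : 0 ≤ a) (s u : ℝ) :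
    cappedInvSq a c u ≤ (Ioc 0 s).indicator (fun _ => c) u + (Ioi s).indicator (a / · ^ 2) u := by
  unfold cappedInvSq
  by_cases hu : u ≤ 0
  · rw [if_pos hu, indicator_of_notMem (fun h => hu.not_gt h.1), zero_add]
    exact indicator_nonneg (fun _ _ => by positivity) u
  · rw [if_neg hu]
    by_cases hus : u ≤ s
    · rw [indicator_of_mem (show u ∈ Ioc 0 s from ⟨not_le.mp hu, hus⟩),
        indicator_of_notMem (show u ∉ Ioi s from not_lt.mpr hus), add_zero]
      exact min_le_right _ _
    · rw [indicator_of_notMem (fun h => hus h.2),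
        indicator_of_mem (show u ∈ Ioi s from not_le.mp hus), zero_add]
      exact min_le_left _ _

lemma integrable_indicator_add_indicator_div_sq (a c : ℝ) {s : ℝ} (hs : 0 < s) :
    Integrable fun u => (Ioc 0 s).indicator (fun _ => c) u + (Ioi s).indicator (a / · ^ 2) u :=
  ((integrable_indicator_iff measurableSet_Ioc).mpr (integrableOn_const measure_Ioc_lt_top.ne)).add
    ((integrable_indicator_iff measurableSet_Ioi).mpr (integrableOn_Ioi_div_sq a hs))

lemma integrable_cappedInvSq (ha : 0 ≤ a) (hc : 0 ≤ c) : Integrable (cappedInvSq a c) := by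
  refine (integrable_indicator_add_indicator_div_sq a c one_pos).mono'
    measurable_cappedInvSq.aestronglyMeasurable (Eventually.of_forall fun u => ?_)
  rw [Real.norm_of_nonneg (cappedInvSq_nonneg ha hc u)]
  exact cappedInvSq_le_indicator_add_indicator ha 1 u

lemma integrable_cappedInvSq_comp {Ω : Type*} {mΩ : MeasurableSpace Ω} {μ : Measure Ω}
    [IsFiniteMeasure μ] (ha : 0 ≤ a) (hc : 0 ≤ c) {f : Ω → ℝ} (hf : Measurable f) :
    Integrable (fun ω => cappedInvSq a c (f ω)) μ :=
  Integrable.of_bound (measurable_cappedInvSq.comp hf).aestronglyMeasurable c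
    (Eventually.of_forall fun _ => norm_cappedInvSq_le ha hc _)

/-- Cut at `s = √(a / c)`, where the two branches of the minimum cross. -/
lemma integral_cappedInvSq_le (ha : 0 < a) (hc : 0 < c) :
    ∫ u, cappedInvSq a c u ≤ 2 * √(a * c) := by
  set s := √(a / c)
  have hs : 0 < s := Real.sqrt_pos.mpr (div_pos ha hc)
  have hint₁ : Integrable ((Ioc 0 s).indicator fun _ => c) :=
    (integrable_indicator_iff measurableSet_Ioc).mpr (integrableOn_const measure_Ioc_lt_top.ne)
  have hint₂ : Integrable ((Ioi s).indicator (a / · ^ 2)) :=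
    (integrable_indicator_iff measurableSet_Ioi).mpr (integrableOn_Ioi_div_sq a hs)
  have hs2 : s ^ 2 = a / c := Real.sq_sqrt (div_pos ha hc).le
  have hcs : c * s = √(a * c) := by
    rw [eq_comm, Real.sqrt_eq_iff_eq_sq (by positivity) (by positivity), mul_pow, hs2]
    field_simp
  have has : a / s = √(a * c) := by
    rw [eq_comm, Real.sqrt_eq_iff_eq_sq (by positivity) (by positivity), div_pow, hs2]
    field_simp
  calc ∫ u, cappedInvSq a c u
      ≤ ∫ u, ((Ioc 0 s).indicator (fun _ => c) u + (Ioi s).indicator (a / · ^ 2) u) :=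
        integral_mono (integrable_cappedInvSq ha.le hc.le) (hint₁.add hint₂)
          (cappedInvSq_le_indicator_add_indicator ha.le s)
    _ = c * s + a / s := by
        rw [integral_add hint₁ hint₂, integral_indicator_const _ measurableSet_Ioc,
          integral_indicator measurableSet_Ioi, integral_Ioi_div_sq a hs]
        simp [measureReal_def, hs.le, mul_comm]
    _ = 2 * √(a * c) := by rw [hcs, has]; ring

end CappedInvSq

instance {α : Type*} {_ : MeasurableSpace α} {μ : Measure α} [NullSingletonClass μ]
    (r : ENNReal) : NullSingletonClass (r • μ) :=
  ⟨fun x => by simp⟩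

lemma integral_comp_sub_le_of_uniform {c₀ c₁ : ℝ} (hc : c₀ ≤ c₁) {h : ℝ → ℝ}
    (h_nonneg : ∀ u, 0 ≤ h u) (h_int : Integrable h) (m : ℝ) :
    ∫ x, h (x - m) ∂((ENNReal.ofReal (c₁ - c₀))⁻¹ • volume.restrict (Icc c₀ c₁))
      ≤ (∫ u, h u) / (c₁ - c₀) := by
  rw [integral_smul_measure, ENNReal.toReal_inv, ENNReal.toReal_ofReal (sub_nonneg.mpr hc),
    smul_eq_mul, inv_mul_eq_div]
  gcongr
  calc ∫ x in Icc c₀ c₁, h (x - m)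
      ≤ ∫ x, h (x - m) :=
        setIntegral_le_integral (h_int.comp_sub_right m) (Eventually.of_forall fun _ => h_nonneg _)
    _ = ∫ u, h u := integral_sub_right_eq_self h m

section Independence

variable {Ω α β : Type*} {mΩ : MeasurableSpace Ω} {μ : Measure Ω}
  [MeasurableSpace α] [MeasurableSpace β] {X : Ω → α} {Y : Ω → β}

lemma ProbabilityTheory.IndepFun.integral_comp_le [IsProbabilityMeasure μ] (hXY : IndepFun X Y μ)
    (hX : AEMeasurable X μ) (hY : AEMeasurable Y μ) {F : α → β → ℝ}
    (hF : Integrable (Function.uncurry F) ((μ.map X).prod (μ.map Y))) {B : ℝ}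
    (hB : ∀ x, ∫ y, F x y ∂(μ.map Y) ≤ B) :
    ∫ ω, F (X ω) (Y ω) ∂μ ≤ B := by
  have hmap : μ.map (fun ω => (X ω, Y ω)) = (μ.map X).prod (μ.map Y) :=
    (indepFun_iff_map_prod_eq_prod_map_map hX hY).mp hXY
  have : IsProbabilityMeasure (μ.map X) := Measure.isProbabilityMeasure_map hX
  calc ∫ ω, F (X ω) (Y ω) ∂μ
      = ∫ p, Function.uncurry F p ∂(μ.map fun ω => (X ω, Y ω)) :=
        (integral_map (hX.prodMk hY) (hmap ▸ hF.aestronglyMeasurable)).symm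
    _ = ∫ x, ∫ y, F x y ∂(μ.map Y) ∂(μ.map X) := by rw [hmap, integral_prod _ hF]; rfl
    _ ≤ ∫ _, B ∂(μ.map X) := integral_mono hF.integral_prod_left (integrable_const B) hB
    _ = B := by simp

lemma ProbabilityTheory.IndepFun.ae_ne [IsFiniteMeasure μ] [MeasurableEq α] {Y : Ω → α}
    (hXY : IndepFun X Y μ) (hX : AEMeasurable X μ) (hY : AEMeasurable Y μ)
    [NullSingletonClass (μ.map Y)] :
    ∀ᵐ ω ∂μ, X ω ≠ Y ω := by
  have hmap : μ.map (fun ω => (X ω, Y ω)) = (μ.map X).prod (μ.map Y) :=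
    (indepFun_iff_map_prod_eq_prod_map_map hX hY).mp hXY
  have hslice : ∀ x, Prod.mk x ⁻¹' Set.diagonal α = {x} := fun x => by ext; simp [eq_comm]
  rw [ae_iff]
  simp only [ne_eq, not_not]
  change μ ((fun ω => (X ω, Y ω)) ⁻¹' Set.diagonal α) = 0
  rw [← Measure.map_apply_of_aemeasurable (hX.prodMk hY) measurableSet_diagonal, hmap,
    Measure.prod_apply measurableSet_diagonal]
  simp [hslice]

lemma ProbabilityTheory.iIndepFun.ae_injective [IsFiniteMeasure μ] [MeasurableEq α] {ι : Type*}
    [Countable ι] {U : ι → Ω → α} (h : iIndepFun U μ) (hU : ∀ i, AEMeasurable (U i) μ)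
    [∀ i, NullSingletonClass (μ.map (U i))] :
    ∀ᵐ ω ∂μ, Function.Injective fun i => U i ω := by
  have hpair : ∀ i j, ∀ᵐ ω ∂μ, U i ω = U j ω → i = j := by
    intro i j
    by_cases hij : i = j
    · exact Eventually.of_forall fun _ _ => hij
    · filter_upwards [(h.indepFun hij).ae_ne (hU i) (hU j)] with ω hω heq using absurd heq hω
  filter_upwards [ae_all_iff.mpr fun i => ae_all_iff.mpr (hpair i)] with ω hω i j using hω i j

end Independence

lemma Finset.card_filter_forall_le_le_one {ι α : Type*} [LinearOrder α] (s : Finset ι)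
    {u : ι → α} (hu : Set.InjOn u s) :
    #{i ∈ s | ∀ j ∈ s, u i ≤ u j} ≤ 1 := by
  refine Finset.card_le_one.mpr fun i hi j hj => ?_
  rw [Finset.mem_filter] at hi hj
  exact hu hi.1 hj.1 ((hi.2 j hj.1).antisymm (hj.2 i hi.1))

lemma min_div_sq_le_ite_add_cappedInvSq {a c x v m : ℝ} (ha : 0 ≤ a) (hc : 0 ≤ c) (hvm : v ≤ m) :
    min (a / (x - v) ^ 2) c ≤ (if x ≤ m then c else 0) + cappedInvSq a c (x - m) := by
  by_cases hxm : x ≤ m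
  · rw [if_pos hxm]
    exact (min_le_right _ _).trans (le_add_of_nonneg_right (cappedInvSq_nonneg ha hc _))
  · have hpos : 0 < x - m := sub_pos.mpr (not_le.mp hxm)
    rw [if_neg hxm, zero_add, cappedInvSq, if_neg hpos.not_ge]
    gcongr

section MinExcept

variable {Ω : Type*} (U : ℕ → Ω → ℝ) (n : ℕ)

noncomputable def minExcept (i : ℕ) (ω : Ω) : ℝ := ⨅ j : (Finset.range n).erase i, U j ω

variable {U n}

lemma minExcept_le {i j : ℕ} (hj : j ∈ (Finset.range n).erase i) (ω : Ω) :
    minExcept U n i ω ≤ U j ω :=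
  ciInf_le (Set.finite_range _).bddBelow (⟨j, hj⟩ : (Finset.range n).erase i)

lemma iInf_fin_le_minExcept (hn : 2 ≤ n) (i : ℕ) (ω : Ω) :
    ⨅ j : Fin n, U j ω ≤ minExcept U n i ω := by
  have : Nonempty ((Finset.range n).erase i) :=
    ((Finset.range_nontrivial hn).erase_nonempty).to_subtype
  refine le_ciInf fun j => ?_
  exact ciInf_le (Set.finite_range _).bddBelow
    (⟨j, Finset.mem_range.mp (Finset.mem_of_mem_erase j.2)⟩ : Fin n)

lemma sum_ite_le_minExcept_le {c : ℝ} (hc : 0 ≤ c) {ω : Ω}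
    (hinj : Function.Injective fun i => U i ω) :
    ∑ i ∈ Finset.range n, (if U i ω ≤ minExcept U n i ω then c else 0) ≤ c := by
  have hmin : ∀ i ∈ Finset.range n, U i ω ≤ minExcept U n i ω →
      ∀ j ∈ Finset.range n, U i ω ≤ U j ω := by
    intro i _ hi j hj
    rcases eq_or_ne j i with rfl | hji
    · exact le_rfl
    · exact hi.trans (minExcept_le (Finset.mem_erase.mpr ⟨hji, hj⟩) ω)
  calc ∑ i ∈ Finset.range n, (if U i ω ≤ minExcept U n i ω then c else 0)
      ≤ ∑ i ∈ Finset.range n, (if ∀ j ∈ Finset.range n, U i ω ≤ U j ω then c else 0) := by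
        refine Finset.sum_le_sum fun i hi => ?_
        split_ifs with h₁ h₂
        exacts [le_rfl, absurd (hmin i hi h₁) h₂, hc, le_rfl]
    _ = #{i ∈ Finset.range n | ∀ j ∈ Finset.range n, U i ω ≤ U j ω} * c := by
        rw [Finset.sum_ite, Finset.sum_const, Finset.sum_const_zero, add_zero, nsmul_eq_mul]
    _ ≤ 1 * c := by
        gcongr
        exact_mod_cast Finset.card_filter_forall_le_le_one _ hinj.injOn
    _ = c := one_mul c

variable {mΩ : MeasurableSpace Ω} {μ : Measure Ω}

lemma measurable_minExcept (hU : ∀ i, Measurable (U i)) (i : ℕ) :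
    Measurable (minExcept U n i) :=
  Measurable.iInf fun j => hU j

lemma ProbabilityTheory.iIndepFun.indepFun_minExcept (h : iIndepFun U μ)
    (hU : ∀ i, Measurable (U i)) (i : ℕ) :
    IndepFun (minExcept U n i) (U i) μ := by
  have hdisj : Disjoint ((Finset.range n).erase i) {i} :=
    Finset.disjoint_singleton_right.mpr (Finset.notMem_erase i _)
  have hinf : Measurable fun v : (Finset.range n).erase i → ℝ => ⨅ j, v j :=
    Measurable.iInf fun j => measurable_pi_apply j
  have heval : Measurable fun v : ({i} : Finset ℕ) → ℝ => v ⟨i, Finset.mem_singleton_self i⟩ :=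
    measurable_pi_apply _
  exact (h.indepFun_finset _ _ hdisj hU).comp hinf heval

lemma integrable_ite_le_minExcept [IsFiniteMeasure μ] (c : ℝ) (hU : ∀ i, Measurable (U i))
    (i : ℕ) : Integrable (fun ω => if U i ω ≤ minExcept U n i ω then c else 0) μ :=
  Integrable.of_bound
    (Measurable.ite (measurableSet_le (hU i) (measurable_minExcept hU i))
      measurable_const measurable_const).aestronglyMeasurable |c|
    (Eventually.of_forall fun ω => by split_ifs <;> simp)

lemma integral_sum_ite_le_minExcept_le [IsProbabilityMeasure μ] {c : ℝ} (hc : 0 ≤ c)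
    (hU : ∀ i, Measurable (U i)) (h : iIndepFun U μ) [∀ i, NullSingletonClass (μ.map (U i))] :
    ∫ ω, ∑ i ∈ Finset.range n, (if U i ω ≤ minExcept U n i ω then c else 0) ∂μ ≤ c :=
  calc _ ≤ ∫ _, c ∂μ :=
        integral_mono_ae (integrable_finsetSum _ fun i _ => integrable_ite_le_minExcept c hU i)
          (integrable_const c)
          (by filter_upwards [h.ae_injective fun i => (hU i).aemeasurable] with ω hω
              using sum_ite_le_minExcept_le hc hω)
    _ = c := by simp

lemma integral_cappedInvSq_sub_minExcept_le [IsProbabilityMeasure μ] {c₀ c₁ a c : ℝ}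
    (hc₀₁ : c₀ ≤ c₁) (ha : 0 < a) (hc : 0 < c) (hU : ∀ i, Measurable (U i)) (h : iIndepFun U μ)
    {i : ℕ} (hunif : μ.map (U i) = (ENNReal.ofReal (c₁ - c₀))⁻¹ • volume.restrict (Icc c₀ c₁)) :
    ∫ ω, cappedInvSq a c (U i ω - minExcept U n i ω) ∂μ ≤ 2 * √(a * c) / (c₁ - c₀) := by
  have : IsProbabilityMeasure (μ.map (minExcept U n i)) :=
    Measure.isProbabilityMeasure_map (measurable_minExcept hU i).aemeasurable
  have : IsProbabilityMeasure (μ.map (U i)) := Measure.isProbabilityMeasure_map (hU i).aemeasurable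
  refine (h.indepFun_minExcept hU i).integral_comp_le
    (measurable_minExcept hU i).aemeasurable (hU i).aemeasurable
    (F := fun m x => cappedInvSq a c (x - m))
    (integrable_cappedInvSq_comp ha.le hc.le (measurable_snd.sub measurable_fst)) fun m => ?_
  rw [hunif]
  refine (integral_comp_sub_le_of_uniform hc₀₁ (cappedInvSq_nonneg ha.le hc.le)
    (integrable_cappedInvSq ha.le hc.le) m).trans ?_
  gcongr
  exact integral_cappedInvSq_le ha hc

end MinExcept

theorem integral_sum_min_div_sq_sub_iInf_le {Ω : Type*} {mΩ : MeasurableSpace Ω}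
    {μ : Measure Ω} [IsProbabilityMeasure μ] {c₀ c₁ a c : ℝ} (hc₀₁ : c₀ ≤ c₁) (ha : 0 < a)
    (hc : 0 < c) {U : ℕ → Ω → ℝ} (hU : ∀ i, Measurable (U i)) (h : iIndepFun U μ)
    (hunif : ∀ i, μ.map (U i) = (ENNReal.ofReal (c₁ - c₀))⁻¹ • volume.restrict (Icc c₀ c₁))
    {n : ℕ} (hn : 2 ≤ n) :
    ∫ ω, ∑ i ∈ Finset.range n, min (a / (U i ω - ⨅ j : Fin n, U j ω) ^ 2) c ∂μ
      ≤ c + n * (2 * √(a * c) / (c₁ - c₀)) := by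
  have : ∀ i, NullSingletonClass (μ.map (U i)) := fun i => hunif i ▸ inferInstance
  have hint_ite := integrable_ite_le_minExcept (μ := μ) (n := n) c hU
  have hint_capped : ∀ i, Integrable (fun ω => cappedInvSq a c (U i ω - minExcept U n i ω)) μ :=
    fun i => integrable_cappedInvSq_comp ha.le hc.le ((hU i).sub (measurable_minExcept hU i))
  calc ∫ ω, ∑ i ∈ Finset.range n, min (a / (U i ω - ⨅ j : Fin n, U j ω) ^ 2) c ∂μ
      ≤ ∫ ω, ∑ i ∈ Finset.range n, ((if U i ω ≤ minExcept U n i ω then c else 0)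
          + cappedInvSq a c (U i ω - minExcept U n i ω)) ∂μ :=
        integral_mono_of_nonneg
          (Eventually.of_forall fun ω => Finset.sum_nonneg fun i _ => le_min (by positivity) hc.le)
          (integrable_finsetSum _ fun i _ => (hint_ite i).add (hint_capped i))
          (Eventually.of_forall fun ω => Finset.sum_le_sum fun i _ =>
            min_div_sq_le_ite_add_cappedInvSq ha.le hc.le (iInf_fin_le_minExcept hn i ω))
    _ = ∫ ω, ∑ i ∈ Finset.range n, (if U i ω ≤ minExcept U n i ω then c else 0) ∂μ
          + ∑ i ∈ Finset.range n, ∫ ω, cappedInvSq a c (U i ω - minExcept U n i ω) ∂μ := by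
        simp_rw [Finset.sum_add_distrib]
        rw [integral_add (integrable_finsetSum _ fun i _ => hint_ite i)
          (integrable_finsetSum _ fun i _ => hint_capped i),
          integral_finsetSum _ fun i _ => hint_capped i]
    _ ≤ c + ∑ _i ∈ Finset.range n, 2 * √(a * c) / (c₁ - c₀) :=
        add_le_add (integral_sum_ite_le_minExcept_le hc.le hU h)
          (Finset.sum_le_sum fun i _ =>
            integral_cappedInvSq_sub_minExcept_le hc₀₁ ha hc hU h (hunif i))
    _ = c + n * (2 * √(a * c) / (c₁ - c₀)) := by simp

lemma mul_sqrt_mul_eq_rpow_mul_sqrt {x : ℝ} (hx : 0 ≤ x) (y : ℝ) :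
    x * √(y * x) = x ^ ((3 : ℝ) / 2) * √y := by
  rw [Real.sqrt_mul' y hx, Real.sqrt_eq_rpow x, show (3 : ℝ) / 2 = 1 + 1 / 2 by norm_num,
    Real.rpow_one_add' hx (by norm_num)]
  ring

theorem integral_sum_min_log_div_sq_sub_iInf_le {Ω : Type*} {mΩ : MeasurableSpace Ω}
    {μ : Measure Ω} [IsProbabilityMeasure μ] {c₀ c₁ K : ℝ} (hc₀₁ : c₀ ≤ c₁) (hK : 0 < K)
    {U : ℕ → Ω → ℝ} (hU : ∀ i, Measurable (U i)) (h : iIndepFun U μ)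
    (hunif : ∀ i, μ.map (U i) = (ENNReal.ofReal (c₁ - c₀))⁻¹ • volume.restrict (Icc c₀ c₁))
    {n : ℕ} (hn : 2 ≤ n) :
    ∫ ω, ∑ i ∈ Finset.range n, min (K * Real.log n / (U i ω - ⨅ j : Fin n, U j ω) ^ 2) (n : ℝ) ∂μ
      ≤ n + 2 * √K / (c₁ - c₀) * ((n : ℝ) ^ ((3 : ℝ) / 2) * √(Real.log n)) := by
  have hn₀ : (0 : ℝ) < n := by positivity
  have hlog : 0 < Real.log n := Real.log_pos (by exact_mod_cast hn)
  have hid := mul_sqrt_mul_eq_rpow_mul_sqrt hn₀.le (K * Real.log n)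
  rw [Real.sqrt_mul hK.le] at hid
  convert integral_sum_min_div_sq_sub_iInf_le hc₀₁ (mul_pos hK hlog) hn₀ hU h hunif hn using 2
  linear_combination (-2 / (c₁ - c₀)) * hid

lemma natCast_isBigO_rpow_mul_sqrt_log :
    (fun n : ℕ => (n : ℝ)) =O[atTop] fun n => (n : ℝ) ^ ((3 : ℝ) / 2) * √(Real.log n) := by
  refine IsBigO.of_bound 1 ?_
  filter_upwards [eventually_ge_atTop 1,
    (Real.tendsto_log_atTop.comp tendsto_natCast_atTop_atTop).eventually_ge_atTop 1]
    with n hn hlog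
  have hn₁ : (1 : ℝ) ≤ n := by exact_mod_cast hn
  rw [one_mul, Real.norm_natCast, Real.norm_of_nonneg (by positivity)]
  calc (n : ℝ) = (n : ℝ) ^ (1 : ℝ) * 1 := by simp
    _ ≤ (n : ℝ) ^ ((3 : ℝ) / 2) * √(Real.log n) := by
      gcongr
      · norm_num
      · exact Real.one_le_sqrt.mpr hlog

/-- Under an i.i.d. Uniform[c₀,c₁] prior on the mean distances, the expected Med-dit sample
complexity bound `∑ᵢ min(K·log n/Δᵢ², n)`, where `Δᵢ` is the gap to the minimum of the first
`n` values, is `O(n^{3/2}·log^{1/2} n)`. -/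
theorem stmt14 {Ω : Type*} [MeasureSpace Ω] [IsProbabilityMeasure (ℙ : Measure Ω)]
    (c₀ c₁ K : ℝ) (hc : c₀ < c₁) (hK : 0 < K)
    (U : ℕ → Ω → ℝ) (hmeas : ∀ i, Measurable (U i))
    (hindep : iIndepFun U ℙ)
    (hunif : ∀ i, Measure.map (U i) ℙ =
      (ENNReal.ofReal (c₁ - c₀))⁻¹ • (volume.restrict (Set.Icc c₀ c₁))) :
    (fun n : ℕ => ∫ ω, ∑ i ∈ Finset.range n,
        min (K * Real.log n / (U i ω - ⨅ j : Fin n, U j ω) ^ 2) (n : ℝ) ∂ℙ)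
      =O[atTop] (fun n : ℕ => (n : ℝ) ^ ((3 : ℝ) / 2) * Real.sqrt (Real.log n)) := by
  have hbound : (fun n : ℕ => ∫ ω, ∑ i ∈ Finset.range n,
      min (K * Real.log n / (U i ω - ⨅ j : Fin n, U j ω) ^ 2) (n : ℝ) ∂ℙ)
        =O[atTop] fun n : ℕ =>
          (n : ℝ) + 2 * √K / (c₁ - c₀) * ((n : ℝ) ^ ((3 : ℝ) / 2) * √(Real.log n)) := by
    refine IsBigO.of_bound 1 ?_
    filter_upwards [eventually_ge_atTop 2] with n hn
    have hnonneg : 0 ≤ ∫ ω, ∑ i ∈ Finset.range n,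
        min (K * Real.log n / (U i ω - ⨅ j : Fin n, U j ω) ^ 2) (n : ℝ) ∂ℙ :=
      integral_nonneg fun ω => Finset.sum_nonneg fun i _ => le_min (by positivity) n.cast_nonneg
    rw [one_mul, Real.norm_of_nonneg hnonneg]
    exact (integral_sum_min_log_div_sq_sub_iInf_le hc.le hK hmeas hindep hunif hn).trans
      (Real.le_norm_self _)
  exact hbound.trans (natCast_isBigO_rpow_mul_sqrt_log.add (isBigO_const_mul_self _ _ atTop))
end
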